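/- arXiv:0907.0382 — 2 statements merged into one kernel-verified Lean document; each statement's English description precedes it below -/
import Mathlib

section
/- Let f : ℝ^d → ℝ be convex, fix x ∈ ℝ^d, and let g(y) := Df(x)[y] be the one-sided directional derivative at x. Fix y ∈ ℝ^d such that g is differentiable at y. Then for every choice of subgradients v_ε ∈ ∂f(x + εy) for ε > 0, the limit lim_{ε↓0} v_ε exists, is independent of the choice of selections, and belongs to ∂f(x); in fact it equals ∇g(y) shifted appropriately (when normalized so that f(x) = 0, g(y) = 0, ∇g(y) = 0, the limit is 0). -/
open Set Filter Topology RealInnerProductSpace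

noncomputable def dirDeriv {d : ℕ} (f : EuclideanSpace ℝ (Fin d) → ℝ)
    (x y : EuclideanSpace ℝ (Fin d)) : ℝ :=
  sInf ((fun lam : ℝ => (f (x + lam • y) - f x) / lam) '' Set.Ioi 0)

def IsSubgradientAt {d : ℕ} (f : EuclideanSpace ℝ (Fin d) → ℝ)
    (x v : EuclideanSpace ℝ (Fin d)) : Prop :=
  ∀ z, f z ≥ f x + ⟪v, z - x⟫

/-!
The difference quotients `t ↦ (f (x + t • z) - f x) / t` are monotone in `t > 0`, so `g = Df(x)[·]`
is their limit as `t ↓ 0`; hence `g` is convex and positively homogeneous. A convex function that is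
differentiable at `y` has its gradient as a subgradient there, and homogeneity turns
`∇g(y) ∈ ∂g(y)` into `⟪∇g(y), ·⟫ ≤ g ≤ f (x + ·) - f x`, i.e. `∇g(y) ∈ ∂f(x)`.

Subgradients of the continuous `f` along the segment `x + [0, 1] • y` are bounded, and dividing the
subgradient inequality at `x + ε • y` by `ε` shows that every cluster point of `v ε` as `ε ↓ 0` is a
subgradient of `g` at `y`. At a point of differentiability the only subgradient is the gradient, so
by compactness `v ε → ∇g(y)`.
-/

section Line

variable {E : Type*} [AddCommGroup E] [Module ℝ E] {f : E → ℝ}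

theorem ConvexOn.comp_line (hf : ConvexOn ℝ univ f) (x z : E) :
    ConvexOn ℝ univ (fun t : ℝ => f (x + t • z)) := by
  refine ⟨convex_univ, fun s _ t _ a b ha hb hab => ?_⟩
  have hpt : a • (x + s • z) + b • (x + t • z) = x + (a • s + b • t) • z := by
    linear_combination (norm := module) hab • x
  simpa only [hpt, smul_eq_mul] using hf.2 (mem_univ (x + s • z)) (mem_univ (x + t • z)) ha hb hab

theorem ConvexOn.diffQuot_mono (hf : ConvexOn ℝ univ f) (x z : E) {s t : ℝ} (hs : s ≠ 0)
    (ht : t ≠ 0) (hst : s ≤ t) :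
    (f (x + s • z) - f x) / s ≤ (f (x + t • z) - f x) / t := by
  simpa using (hf.comp_line x z).secant_mono (mem_univ 0) (mem_univ s) (mem_univ t) hs ht hst

theorem ConvexOn.monotoneOn_diffQuot (hf : ConvexOn ℝ univ f) (x z : E) :
    MonotoneOn (fun t : ℝ => (f (x + t • z) - f x) / t) (Ioi 0) :=
  fun _ hs _ ht hst => hf.diffQuot_mono x z (ne_of_gt hs) (ne_of_gt ht) hst

theorem ConvexOn.bddBelow_diffQuot (hf : ConvexOn ℝ univ f) (x z : E) :
    BddBelow ((fun t : ℝ => (f (x + t • z) - f x) / t) '' Ioi 0) := by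
  refine ⟨f x - f (x - z), ?_⟩
  rintro _ ⟨t, ht, rfl⟩
  have := hf.diffQuot_mono x z (s := -1) (by norm_num) (ne_of_gt ht) (by linarith [mem_Ioi.1 ht])
  rwa [neg_one_smul, ← sub_eq_add_neg, div_neg, div_one, neg_sub] at this

theorem ConvexOn.diffQuot_convexComb_le (hf : ConvexOn ℝ univ f) (x z w : E) {a b t : ℝ}
    (ha : 0 ≤ a) (hb : 0 ≤ b) (hab : a + b = 1) (ht : 0 < t) :
    (f (x + t • (a • z + b • w)) - f x) / t
      ≤ a * ((f (x + t • z) - f x) / t) + b * ((f (x + t • w) - f x) / t) := by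
  have hpt : a • (x + t • z) + b • (x + t • w) = x + t • (a • z + b • w) := by
    linear_combination (norm := module) hab • x
  have key := hf.2 (mem_univ (x + t • z)) (mem_univ (x + t • w)) ha hb hab
  rw [hpt, smul_eq_mul, smul_eq_mul] at key
  rw [mul_div_assoc', mul_div_assoc', ← add_div]
  gcongr
  linear_combination key + f x * hab

end Line

section DirDeriv

variable {d : ℕ} {f : EuclideanSpace ℝ (Fin d) → ℝ}

theorem tendsto_dirDeriv (hf : ConvexOn ℝ univ f) (x z : EuclideanSpace ℝ (Fin d)) :
    Tendsto (fun t : ℝ => (f (x + t • z) - f x) / t) (𝓝[>] 0) (𝓝 (dirDeriv f x z)) :=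
  (hf.monotoneOn_diffQuot x z).tendsto_nhdsGT (hf.bddBelow_diffQuot x z)

theorem dirDeriv_le_diffQuot (hf : ConvexOn ℝ univ f) (x z : EuclideanSpace ℝ (Fin d)) {t : ℝ}
    (ht : 0 < t) : dirDeriv f x z ≤ (f (x + t • z) - f x) / t :=
  csInf_le (hf.bddBelow_diffQuot x z) ⟨t, ht, rfl⟩

theorem dirDeriv_sub_le (hf : ConvexOn ℝ univ f) (x z : EuclideanSpace ℝ (Fin d)) :
    dirDeriv f x (z - x) ≤ f z - f x := by
  simpa using dirDeriv_le_diffQuot hf x (z - x) one_pos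

theorem convexOn_dirDeriv (hf : ConvexOn ℝ univ f) (x : EuclideanSpace ℝ (Fin d)) :
    ConvexOn ℝ univ (dirDeriv f x) := by
  refine ⟨convex_univ, fun z _ w _ a b ha hb hab => ?_⟩
  refine le_of_tendsto_of_tendsto (tendsto_dirDeriv hf x _)
    (((tendsto_dirDeriv hf x z).const_mul a).add ((tendsto_dirDeriv hf x w).const_mul b)) ?_
  filter_upwards [self_mem_nhdsWithin] with t ht
  exact hf.diffQuot_convexComb_le x z w ha hb hab ht

theorem dirDeriv_smul (hf : ConvexOn ℝ univ f) (x z : EuclideanSpace ℝ (Fin d)) {c : ℝ}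
    (hc : 0 < c) : dirDeriv f x (c • z) = c * dirDeriv f x z := by
  have hscale : Tendsto (· * c) (𝓝[>] (0 : ℝ)) (𝓝[>] 0) :=
    tendsto_nhdsWithin_iff.2 ⟨((continuous_mul_const c).tendsto' 0 0 (zero_mul c)).mono_left
      nhdsWithin_le_nhds, eventually_mem_nhdsWithin.mono fun t ht => mul_pos ht hc⟩
  refine tendsto_nhds_unique (tendsto_dirDeriv hf x (c • z)) ?_
  refine (((tendsto_dirDeriv hf x z).comp hscale).const_mul c).congr' ?_
  filter_upwards [self_mem_nhdsWithin] with t (ht : 0 < t)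
  simp only [Function.comp_apply, smul_smul]
  field_simp

end DirDeriv

section Subgradient

variable {d : ℕ} {g : EuclideanSpace ℝ (Fin d) → ℝ} {y L : EuclideanSpace ℝ (Fin d)}

theorem ConvexOn.isSubgradientAt_of_hasGradientAt (hg : ConvexOn ℝ univ g)
    (hL : HasGradientAt g L y) : IsSubgradientAt g y L := by
  intro z
  have hline : HasDerivAt (fun t : ℝ => g (y + t • (z - y))) ⟪L, z - y⟫ 0 := by
    have hpath : HasDerivAt (fun t : ℝ => y + t • (z - y)) (z - y) 0 := by
      simpa using ((hasDerivAt_id (0 : ℝ)).smul_const (z - y)).const_add y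
    exact hL.hasFDerivAt.comp_hasDerivAt_of_eq 0 hpath (by simp)
  have := (hg.comp_line y (z - y)).le_slope_of_hasDerivAt (mem_univ 0) (mem_univ 1) one_pos hline
  simp only [slope_def_field, zero_smul, add_zero, one_smul, add_sub_cancel, sub_zero,
    div_one] at this
  linarith

theorem IsSubgradientAt.eq_of_hasGradientAt {a : EuclideanSpace ℝ (Fin d)}
    (ha : IsSubgradientAt g y a) (hL : HasGradientAt g L y) : a = L := by
  have hderiv := hL.hasFDerivAt.sub ((innerSL ℝ a).hasFDerivAt.sub_const ⟪a, y⟫)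
  have hmin : IsLocalMin (g - fun z => innerSL ℝ a z - ⟪a, y⟫) y :=
    Eventually.of_forall fun z => by
      have := ha z
      simp only [Pi.sub_apply, innerSL_apply_apply, sub_self, sub_zero, inner_sub_right] at this ⊢
      linarith
  refine ext_inner_right ℝ fun u => ?_
  have hzero := DFunLike.congr_fun (hmin.hasFDerivAt_eq_zero hderiv) u
  simp only [sub_apply, InnerProductSpace.toDual_apply_apply, innerSL_apply_apply,
    zero_apply] at hzero
  linarith

theorem IsSubgradientAt.inner_le_of_posHomogeneous (h : IsSubgradientAt g y L)
    (hg : ∀ c : ℝ, 0 < c → ∀ z, g (c • z) = c * g z) (z : EuclideanSpace ℝ (Fin d)) :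
    ⟪L, z⟫ ≤ g z := by
  -- testing the subgradient inequality at `2 • y` and `2⁻¹ • y` gives `⟪L, y⟫ = g y`
  have hup := h ((2 : ℝ) • y)
  have hdown := h ((2 : ℝ)⁻¹ • y)
  rw [hg 2 two_pos] at hup
  rw [hg _ (by norm_num)] at hdown
  have := h z
  simp only [inner_sub_right, real_inner_smul_right] at hup hdown this
  linarith

end Subgradient

section Bound

variable {d : ℕ} {f : EuclideanSpace ℝ (Fin d) → ℝ}

theorem IsSubgradientAt.norm_le {p w : EuclideanSpace ℝ (Fin d)} {M : ℝ}
    (hw : IsSubgradientAt f p w) (hM : ∀ z ∈ Metric.closedBall p 1, f z ≤ M) :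
    ‖w‖ ≤ M - f p := by
  rcases eq_or_ne w 0 with rfl | hw0
  · simpa using hM p (Metric.mem_closedBall_self zero_le_one)
  have hunit : p + ‖w‖⁻¹ • w ∈ Metric.closedBall p 1 := by
    simp [norm_smul, hw0]
  have hgain : ⟪w, ‖w‖⁻¹ • w⟫ = ‖w‖ := by
    rw [real_inner_smul_right, real_inner_self_eq_norm_sq]
    field_simp
  have := hw (p + ‖w‖⁻¹ • w)
  rw [add_sub_cancel_left, hgain] at this
  linarith [hM _ hunit]

theorem exists_norm_le_of_isSubgradientAt (hf : Continuous f) {K : Set (EuclideanSpace ℝ (Fin d))}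
    (hK : IsCompact K) : ∃ M, ∀ p ∈ K, ∀ w, IsSubgradientAt f p w → ‖w‖ ≤ M := by
  obtain ⟨M, hM⟩ := (hK.cthickening (r := 1)).bddAbove_image hf.continuousOn
  obtain ⟨m, hm⟩ := hK.bddBelow_image hf.continuousOn
  refine ⟨M - m, fun p hp w hw => ?_⟩
  have := hw.norm_le fun z hz => hM ⟨z, Metric.closedBall_subset_cthickening hp 1 hz, rfl⟩
  linarith [hm ⟨p, hp, rfl⟩]

end Bound

section Limit

variable {d : ℕ} {f : EuclideanSpace ℝ (Fin d) → ℝ} {x y : EuclideanSpace ℝ (Fin d)}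

theorem IsSubgradientAt.of_dirDeriv (hf : ConvexOn ℝ univ f) {L : EuclideanSpace ℝ (Fin d)}
    (h : IsSubgradientAt (dirDeriv f x) y L) : IsSubgradientAt f x L := by
  intro z
  have := h.inner_le_of_posHomogeneous (fun c hc z => dirDeriv_smul hf x z hc) (z - x)
  linarith [dirDeriv_sub_le hf x z]

theorem IsSubgradientAt.dirDeriv_add_inner_le (hf : ConvexOn ℝ univ f)
    {w : EuclideanSpace ℝ (Fin d)} {ε t : ℝ} (hw : IsSubgradientAt f (x + ε • y) w) (hε : 0 < ε)
    (hεt : ε ≤ t) (z : EuclideanSpace ℝ (Fin d)) :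
    dirDeriv f x y + ⟪w, z - y⟫ ≤ (f (x + t • z) - f x) / t := by
  have hsub := hw (x + ε • z)
  rw [show x + ε • z - (x + ε • y) = ε • (z - y) by module, real_inner_smul_right] at hsub
  have hy := dirDeriv_le_diffQuot hf x y hε
  rw [le_div_iff₀ hε] at hy
  calc dirDeriv f x y + ⟪w, z - y⟫ ≤ (f (x + ε • z) - f x) / ε := by
        rw [le_div_iff₀ hε]; linarith
    _ ≤ (f (x + t • z) - f x) / t := hf.diffQuot_mono x z hε.ne' (hε.trans_le hεt).ne' hεt

theorem isSubgradientAt_dirDeriv_of_mapClusterPt (hf : ConvexOn ℝ univ f)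
    {v : ℝ → EuclideanSpace ℝ (Fin d)} (hv : ∀ ε : ℝ, 0 < ε → IsSubgradientAt f (x + ε • y) (v ε))
    {a : EuclideanSpace ℝ (Fin d)} (ha : MapClusterPt a (𝓝[>] 0) v) :
    IsSubgradientAt (dirDeriv f x) y a := by
  intro z
  refine ge_of_tendsto (tendsto_dirDeriv hf x z) ?_
  filter_upwards [self_mem_nhdsWithin] with t (ht : 0 < t)
  have hclosed : IsClosed {w | dirDeriv f x y + ⟪w, z - y⟫ ≤ (f (x + t • z) - f x) / t} :=
    isClosed_le (by fun_prop) continuous_const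
  refine hclosed.mem_of_mapClusterPt ha ?_
  filter_upwards [Ioc_mem_nhdsGT ht] with ε hε
  exact (hv ε hε.1).dirDeriv_add_inner_le hf hε.1 hε.2 z

theorem tendsto_of_isSubgradientAt (hf : ConvexOn ℝ univ f) {L : EuclideanSpace ℝ (Fin d)}
    (hL : HasGradientAt (dirDeriv f x) L y) {v : ℝ → EuclideanSpace ℝ (Fin d)}
    (hv : ∀ ε : ℝ, 0 < ε → IsSubgradientAt f (x + ε • y) (v ε)) :
    Tendsto v (𝓝[>] 0) (𝓝 L) := by
  have hseg : IsCompact ((fun ε : ℝ => x + ε • y) '' Icc 0 1) :=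
    isCompact_Icc.image (by fun_prop)
  obtain ⟨M, hM⟩ :=
    exists_norm_le_of_isSubgradientAt (continuousOn_univ.1 (hf.continuousOn isOpen_univ)) hseg
  refine (isCompact_closedBall 0 M).tendsto_nhds_of_unique_mapClusterPt ?_
    fun a _ ha => (isSubgradientAt_dirDeriv_of_mapClusterPt hf hv ha).eq_of_hasGradientAt hL
  filter_upwards [Ioc_mem_nhdsGT one_pos] with ε hε
  exact mem_closedBall_zero_iff.2
    (hM _ (mem_image_of_mem _ (Ioc_subset_Icc_self hε)) _ (hv ε hε.1))

end Limit

/-- If `g := Df(x)[·]` is differentiable at `y`, then for every choice of subgradients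
`v_ε ∈ ∂f(x + εy)` the limit `lim_{ε↓0} v_ε` exists, is the same for all selections,
belongs to `∂f(x)`, and under the normalization `f(x) = 0`, `g(y) = 0`, `∇g(y) = 0`,
the limit equals `0`. -/
theorem stmt_10 {d : ℕ} (f : EuclideanSpace ℝ (Fin d) → ℝ)
    (hf : ConvexOn ℝ Set.univ f) (x y : EuclideanSpace ℝ (Fin d))
    (hg : DifferentiableAt ℝ (dirDeriv f x) y) :
    ∃ L : EuclideanSpace ℝ (Fin d),
      IsSubgradientAt f x L ∧
      (∀ v : ℝ → EuclideanSpace ℝ (Fin d),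
        (∀ ε : ℝ, 0 < ε → IsSubgradientAt f (x + ε • y) (v ε)) →
          Tendsto v (𝓝[>] (0 : ℝ)) (𝓝 L)) ∧
      ((f x = 0 ∧ dirDeriv f x y = 0 ∧ gradient (dirDeriv f x) y = 0) → L = 0) := by
  have hL := hg.hasGradientAt
  have hsub := (convexOn_dirDeriv hf x).isSubgradientAt_of_hasGradientAt hL
  exact ⟨gradient (dirDeriv f x) y, hsub.of_dirDeriv hf,
    fun v hv => tendsto_of_isSubgradientAt hf hL hv, fun h => h.2.2⟩
end

section
/- Let f : ℝ^d → ℝ be convex and fix x, y ∈ ℝ^d with y ≠ 0. Suppose the one-sided directional derivative function g(z) := Df(x)[z] is differentiable at y, and suppose after normalization f(x) = 0, g(y) = 0, ∇g(y) = 0. If ε_n ↓ 0 and v_n ∈ ∂f(x + ε_n y) with v_n → h, and u ∈ ℝ^d, then g(y + λu) ≥ λ⟨h, u⟩ for all λ > 0; consequently ⟨∇g(y), u⟩ ≥ ⟨h, u⟩, forcing h = 0. -/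
open Set Filter Topology RealInnerProductSpace

/-- With `g(z) := Df(x)[z]` differentiable at `y ≠ 0` and the normalization
`f(x) = 0`, `g(y) = 0`, `∇g(y) = 0`: if `ε_n ↓ 0`, `v_n ∈ ∂f(x + ε_n y)` and
`v_n → h`, then for every `u` one has `g(y + λu) ≥ λ⟨h, u⟩` for all `λ > 0`,
hence `⟨∇g(y), u⟩ ≥ ⟨h, u⟩`, forcing `h = 0`. -/
theorem stmt_11 {d : ℕ} (f : EuclideanSpace ℝ (Fin d) → ℝ)
    (hf : ConvexOn ℝ Set.univ f) (x y : EuclideanSpace ℝ (Fin d)) (hy : y ≠ 0)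
    (hg : DifferentiableAt ℝ (dirDeriv f x) y)
    (hfx : f x = 0) (hgy : dirDeriv f x y = 0)
    (hgrad : gradient (dirDeriv f x) y = 0)
    (ε : ℕ → ℝ) (hεpos : ∀ n, 0 < ε n) (hεanti : Antitone ε)
    (hεlim : Filter.Tendsto ε atTop (𝓝 0))
    (v : ℕ → EuclideanSpace ℝ (Fin d))
    (hv : ∀ n, IsSubgradientAt f (x + ε n • y) (v n))
    (h : EuclideanSpace ℝ (Fin d)) (hvh : Filter.Tendsto v atTop (𝓝 h))
    (u : EuclideanSpace ℝ (Fin d)) :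
    (∀ lam : ℝ, 0 < lam → dirDeriv f x (y + lam • u) ≥ lam * ⟪h, u⟫) ∧
    ⟪gradient (dirDeriv f x) y, u⟫ ≥ ⟪h, u⟫ ∧ h = 0 := by
  classical
  -- Convexity of the restriction to lines through `x`.
  have hconv : ∀ w : EuclideanSpace ℝ (Fin d),
      ConvexOn ℝ (Set.univ : Set ℝ) (fun t : ℝ => f (x + t • w)) := by
    intro w
    have h1 := hf.comp_affineMap (AffineMap.lineMap x (x + w))
    have h2 : (f ∘ (AffineMap.lineMap x (x + w)))
        = fun t : ℝ => f (x + t • w) := by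
      funext t
      simp [AffineMap.lineMap_apply, add_comm]
    rw [h2] at h1
    simpa using h1
  have hslope : ∀ (w : EuclideanSpace ℝ (Fin d)) (t : ℝ),
      slope (fun s : ℝ => f (x + s • w)) 0 t = (f (x + t • w) - f x) / t := by
    intro w t
    simp [slope_def_field]
  -- Monotonicity of difference quotients.
  have hmono : ∀ (w : EuclideanSpace ℝ (Fin d)) (s t : ℝ), 0 < s → s ≤ t →
      (f (x + s • w) - f x) / s ≤ (f (x + t • w) - f x) / t := by
    intro w s t hs hst
    have := (hconv w).slope_mono (Set.mem_univ (0 : ℝ))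
      ⟨Set.mem_univ s, hs.ne'⟩ ⟨Set.mem_univ t, (hs.trans_le hst).ne'⟩ hst
    rwa [hslope, hslope] at this
  -- Lower bound for the difference quotients.
  have hlb : ∀ (w : EuclideanSpace ℝ (Fin d)) (t : ℝ), 0 < t →
      f x - f (x - w) ≤ (f (x + t • w) - f x) / t := by
    intro w t ht
    have := (hconv w).slope_mono (Set.mem_univ (0 : ℝ))
      ⟨Set.mem_univ (-1 : ℝ), by norm_num⟩ ⟨Set.mem_univ t, ht.ne'⟩
      (by linarith)
    rw [hslope, hslope] at this
    have hneg : (f (x + (-1 : ℝ) • w) - f x) / (-1 : ℝ) = f x - f (x - w) := by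
      rw [div_neg, div_one]
      rw [show x + (-1 : ℝ) • w = x - w by module]
      ring
    rwa [hneg] at this
  have hbdd : ∀ w : EuclideanSpace ℝ (Fin d),
      BddBelow ((fun t : ℝ => (f (x + t • w) - f x) / t) '' Set.Ioi 0) := by
    intro w
    refine ⟨f x - f (x - w), ?_⟩
    rintro _ ⟨t, ht, rfl⟩
    exact hlb w t ht
  have hne : ∀ w : EuclideanSpace ℝ (Fin d),
      ((fun t : ℝ => (f (x + t • w) - f x) / t) '' Set.Ioi 0).Nonempty :=
    fun w => ⟨_, ⟨1, by norm_num, rfl⟩⟩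
  have hinf_le : ∀ (w : EuclideanSpace ℝ (Fin d)) (t : ℝ), 0 < t →
      dirDeriv f x w ≤ (f (x + t • w) - f x) / t := by
    intro w t ht
    exact csInf_le (hbdd w) ⟨t, ht, rfl⟩
  -- `f (x + ε n • y) ≥ 0`.
  have hfεy : ∀ n, 0 ≤ f (x + ε n • y) := by
    intro n
    have h0 : (0 : ℝ) ≤ (f (x + ε n • y) - f x) / ε n := hgy ▸ hinf_le y (ε n) (hεpos n)
    rw [hfx, sub_zero] at h0
    have := (le_div_iff₀ (hεpos n)).mp h0
    simpa using this
  -- Main inequality, for an arbitrary direction `u'`.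
  have hP : ∀ (u' : EuclideanSpace ℝ (Fin d)) (lam : ℝ), 0 < lam →
      lam * ⟪h, u'⟫ ≤ dirDeriv f x (y + lam • u') := by
    intro u' lam hlam
    set w := y + lam • u' with hw
    set q : ℕ → ℝ := fun n => (f (x + ε n • w) - f x) / ε n with hqdef
    have hqanti : Antitone q := fun n m hnm =>
      hmono w (ε m) (ε n) (hεpos m) (hεanti hnm)
    have hqb : BddBelow (Set.range q) := by
      refine ⟨f x - f (x - w), ?_⟩
      rintro _ ⟨n, rfl⟩
      exact hlb w (ε n) (hεpos n)
    have htend : Tendsto q atTop (𝓝 (⨅ n, q n)) := tendsto_atTop_ciInf hqanti hqb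
    have hiinf : (⨅ n, q n) = dirDeriv f x w := by
      apply le_antisymm
      · apply le_csInf (hne w)
        rintro _ ⟨t, ht, rfl⟩
        obtain ⟨n, hn⟩ := (hεlim.eventually_lt_const ht).exists
        exact (ciInf_le hqb n).trans (hmono w (ε n) t (hεpos n) hn.le)
      · exact le_ciInf fun n => hinf_le w (ε n) (hεpos n)
    have hq_ge : ∀ n, lam * ⟪v n, u'⟫ ≤ q n := by
      intro n
      have hsub := hv n (x + ε n • w)
      have hdiff : (x + ε n • w) - (x + ε n • y) = (ε n * lam) • u' := by
        rw [hw]; module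
      rw [hdiff, real_inner_smul_right] at hsub
      have h1 : ε n * lam * ⟪v n, u'⟫ ≤ f (x + ε n • w) := by
        have := hfεy n
        linarith [hsub]
      show lam * ⟪v n, u'⟫ ≤ (f (x + ε n • w) - f x) / ε n
      rw [le_div_iff₀ (hεpos n), hfx, sub_zero]
      nlinarith [h1]
    have hvt : Tendsto (fun n => lam * ⟪v n, u'⟫) atTop (𝓝 (lam * ⟪h, u'⟫)) :=
      (hvh.inner tendsto_const_nhds).const_mul lam
    exact le_of_tendsto_of_tendsto' hvt (hiinf ▸ htend) hq_ge
  -- From differentiability with zero gradient: `⟪h, u'⟫ ≤ 0` for all `u'`.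
  have hQ : ∀ u' : EuclideanSpace ℝ (Fin d), ⟪h, u'⟫ ≤ 0 := by
    intro u'
    have hgr : HasGradientAt (dirDeriv f x) (0 : EuclideanSpace ℝ (Fin d)) y :=
      hgrad ▸ hg.hasGradientAt
    have hfd : HasFDerivAt (dirDeriv f x)
        (0 : EuclideanSpace ℝ (Fin d) →L[ℝ] ℝ) y := by
      have := hgr.hasFDerivAt
      simpa using this
    have hld : HasDerivAt (fun t : ℝ => dirDeriv f x (y + t • u')) 0 0 := by
      have := hfd.hasLineDerivAt u'
      simpa [HasLineDerivAt] using this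
    have hslope0 : Tendsto (slope (fun t : ℝ => dirDeriv f x (y + t • u')) 0)
        (𝓝[≠] (0 : ℝ)) (𝓝 0) := hasDerivAt_iff_tendsto_slope.mp hld
    have hsub : Tendsto (slope (fun t : ℝ => dirDeriv f x (y + t • u')) 0)
        (𝓝[>] (0 : ℝ)) (𝓝 0) :=
      hslope0.mono_left (nhdsWithin_mono _ (fun t ht => ne_of_gt ht))
    refine ge_of_tendsto hsub ?_
    filter_upwards [self_mem_nhdsWithin] with t ht
    have ht' : (0 : ℝ) < t := ht
    rw [slope_def_field]
    simp only [zero_smul, add_zero, hgy, sub_zero]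
    rw [le_div_iff₀ ht']
    have := hP u' t ht'
    nlinarith [this]
  have hzero : h = 0 := by
    have h1 : ⟪h, h⟫ ≤ 0 := hQ h
    have h2 : (0 : ℝ) ≤ ⟪h, h⟫ := real_inner_self_nonneg
    exact inner_self_eq_zero.mp (le_antisymm h1 h2)
  refine ⟨fun lam hlam => hP u lam hlam, ?_, hzero⟩
  rw [hgrad]
  simpa using hQ u
end
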